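/- Let G be a finite group, M a monoid functor for G, and H ≤ G. For (K,s) ∈ R(H,M) and L ≤ H, set y_L^{(K,s)} = Σ_{hN_H(K,s) ∈ N_H(K)/N_H(K,s)} {}^{rh}s if L = ʳK for some r ∈ H, and y_L^{(K,s)} = 0 otherwise. Then: (i) the elements (y_L^{(K,s)})_{L≤H} for (K,s) ∈ R(H,M) form a free Z-basis of ℧(H,M), so the additive map κ_H : Ω̃(H,M) → ℧(H,M) sending the standard basis vector at (K,s) to (y_L^{(K,s)})_{L≤H} is an isomorphism; (ii) κ_H ∘ φ_H = ρ_H, where ρ_H is the mark homomorphism; (iii) φ_H and ρ_H are injective. -/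

import Mathlib

/-!
Since conjugation commutes with restriction, an element of `℧(H,M)` is the same as an integer
function on `S(H,M)` (the coefficient of `t` in `x_U`) that is constant on `H`-orbits, and
`y^{(K,s)}` is the indicator function of the orbit of `(K,s)`. Hence `κ_H` just reads off such a
function from its values on `R(H,M)`, so it is bijective. The coefficient of `t` in
`ρ_H([(H/K)_s])_U` counts the cosets `hK` such that `(U,t)` is a restriction of `ʰ(K,s)`, which is
the `(U,t)`-coordinate of `φ_H([(H/K)_s])`; this gives `κ_H ∘ φ_H = ρ_H`. Finally, the matrix of
`φ_H` is triangular: a nonzero entry at `((K,s),(U,t))` forces `|U| ≤ |K|`, with equality only when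
`(U,t)` is conjugate to `(K,s)`, and the diagonal entries are positive. So `φ_H`, and with it
`ρ_H = κ_H ∘ φ_H`, is injective.
-/

set_option linter.unusedSectionVars false
set_option linter.unusedVariables false

open scoped Classical

namespace LB
noncomputable section

variable {G : Type*} [Group G]

def conjS (g : G) (K : Subgroup G) : Subgroup G :=
  K.map ((MulAut.conj g).toMonoidHom)

theorem mem_conjS {g x : G} {K : Subgroup G} : x ∈ conjS g K ↔ g⁻¹ * x * g ∈ K := by
  unfold conjS
  rw [Subgroup.mem_map]
  constructor
  · rintro ⟨y, hy, rfl⟩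
    have h2 : g⁻¹ * ((MulAut.conj g).toMonoidHom y) * g = y := by
      simp only [MulEquiv.coe_toMonoidHom, MulAut.conj_apply]; group
    rw [h2]; exact hy
  · intro h
    refine ⟨g⁻¹ * x * g, h, ?_⟩
    simp only [MulEquiv.coe_toMonoidHom, MulAut.conj_apply]; group

theorem conjS_mono (g : G) {K K' : Subgroup G} (h : K ≤ K') : conjS g K ≤ conjS g K' :=
  Subgroup.map_mono h


/-- The Möbius function of a finite partial order. -/
noncomputable def mob {α : Type*} [PartialOrder α] [Finite α] (a b : α) : ℤ :=
  letI : Fintype α := Fintype.ofFinite α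
  letI : @DecidableRel α α (· < ·) := Classical.decRel _
  letI : LocallyFiniteOrder α := Fintype.toLocallyFiniteOrder
  IncidenceAlgebra.mu ℤ a b

/-- A monoid functor for `G` (Definition 2.2 of the paper). -/
structure MonoidFunctor (G : Type*) [Group G] where
  M : Subgroup G → Type*
  instM : ∀ K, Monoid (M K)
  con : ∀ (g : G) (K : Subgroup G), M K →* M (conjS g K)
  res : ∀ {K H : Subgroup G}, K ≤ H → (M H →* M K)
  con_mul : ∀ (g r : G) (K : Subgroup G) (s : M K),
    (⟨conjS g (conjS r K), con g (conjS r K) (con r K s)⟩ : Σ K : Subgroup G, M K)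
      = ⟨conjS (g * r) K, con (g * r) K s⟩
  con_id : ∀ (K : Subgroup G) (h : G), h ∈ K → ∀ s : M K,
    (⟨conjS h K, con h K s⟩ : Σ K : Subgroup G, M K) = ⟨K, s⟩
  res_res : ∀ {L K H : Subgroup G} (hLK : L ≤ K) (hKH : K ≤ H) (s : M H),
    res hLK (res hKH s) = res (hLK.trans hKH) s
  res_self : ∀ (H : Subgroup G) (s : M H), res le_rfl s = s
  con_res : ∀ (g : G) {K H : Subgroup G} (hKH : K ≤ H) (s : M H),
    con g K (res hKH s) = res (conjS_mono g hKH) (con g H s)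

attribute [instance] MonoidFunctor.instM

variable (Mf : MonoidFunctor G)

/-- The disjoint union of the monoids `M K`. -/
abbrev Sig (Mf : MonoidFunctor G) := Σ K : Subgroup G, Mf.M K

/-- The conjugation action on pairs `(K, s)`. -/
def dot (g : G) (x : Sig Mf) : Sig Mf := ⟨conjS g x.1, Mf.con g x.1 x.2⟩

theorem dot_one (x : Sig Mf) : dot Mf 1 x = x := Mf.con_id x.1 1 (one_mem _) x.2

theorem dot_mul (g r : G) (x : Sig Mf) : dot Mf g (dot Mf r x) = dot Mf (g * r) x :=
  Mf.con_mul g r x.1 x.2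

/-- `N_H(K,s)`, the stabilizer in `H` of the pair `(K,s)`. -/
def NGpair (H : Subgroup G) (x : Sig Mf) : Subgroup G where
  carrier := {g | g ∈ H ∧ dot Mf g x = x}
  one_mem' := ⟨H.one_mem, dot_one Mf x⟩
  mul_mem' := by
    rintro a b ⟨ha, da⟩ ⟨hb, db⟩
    exact ⟨H.mul_mem ha hb, by rw [← dot_mul, db, da]⟩
  inv_mem' := by
    rintro a ⟨ha, da⟩
    refine ⟨H.inv_mem ha, ?_⟩
    conv_lhs => rw [← da]
    rw [dot_mul, inv_mul_cancel, dot_one]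

/-- A complete set of representatives `R(H,M)` of the `H`-orbits of the set `S(H,M)` of
pairs `(K,s)` with `K ≤ H` and `s ∈ M(K)`. -/
structure Reps (Mf : MonoidFunctor G) (H : Subgroup G) where
  R : Set (Sig Mf)
  subset : ∀ x ∈ R, x.1 ≤ H
  complete : ∀ x : Sig Mf, x.1 ≤ H → ∃! y, y ∈ R ∧ ∃ h ∈ H, dot Mf h x = y

variable {H : Subgroup G}

/-- The coordinate of a tuple indexed by `R(H,M)` at (the orbit of) an arbitrary pair. -/
def coordAt {A : Type*} [AddCommMonoid A] (R : Reps Mf H) (v : ↥R.R → A) (y : Sig Mf) : A :=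
  ∑ᶠ (k : ↥R.R) (_ : ∃ h ∈ H, dot Mf h y = ↑k), v k

/-- The number of cosets `hK ∈ H/K` with `U ≤ ʰK` and `t = res(ʰs)`,
for `x = (K,s)` and `u = (U,t)`. -/
def invCount (H : Subgroup G) (x u : Sig Mf) : ℕ :=
  Nat.card {q : ↥H ⧸ x.1.subgroupOf H //
    ∃ h : ↥H, QuotientGroup.mk h = q ∧
      ∃ hle : u.1 ≤ conjS (h : G) x.1, u.2 = Mf.res hle (Mf.con (h : G) x.1 x.2)}

/-- The mark morphism `φ_H` in coordinates. -/
def phiM (R : Reps Mf H) (f : ↥R.R → ℤ) : ↥R.R → ℤ :=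
  fun u => ∑ᶠ k : ↥R.R, f k * (invCount Mf H k.1 u.1 : ℤ)

/-- `|W_H(K,s)| = |N_H(K,s)/K|`. -/
def WCard (H : Subgroup G) (x : Sig Mf) : ℕ := (x.1.subgroupOf (NGpair Mf H x)).index

/-- The order of a Sylow `p`-subgroup of a group of order `n`; for `p = 0`
(representing `p = ∞`) it is `n` itself. -/
def sylCard (p n : ℕ) : ℕ := if p = 0 then n else p ^ (n.factorization p)

/-- The multiplicative set `ℤ ∖ (p)` (for `p` prime), resp. the units of `ℤ` (for `p = 0`,
representing `p = ∞`), so that `Localization (locMon p hp)` is `ℤ_(p)`, resp. `ℤ`. -/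
def locMon (p : ℕ) (hp : p = 0 ∨ p.Prime) : Submonoid ℤ where
  carrier := {k | if p = 0 then IsUnit k else ¬ (p : ℤ) ∣ k}
  one_mem' := by
    rcases hp with h | h
    · simp [h]
    · simp only [Set.mem_setOf_eq, if_neg h.ne_zero]
      intro hd
      exact h.one_lt.ne' (by exact_mod_cast Int.eq_one_of_dvd_one (by positivity) hd)
  mul_mem' := by
    intro a b ha hb
    rcases hp with h | h
    · simp only [Set.mem_setOf_eq, if_pos h] at *
      exact ha.mul hb
    · simp only [Set.mem_setOf_eq, if_neg h.ne_zero] at *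
      intro hd
      rcases ((Nat.prime_iff_prime_int.mp h).dvd_mul.mp hd) with h1 | h1
      · exact ha h1
      · exact hb h1

/-- `ℤ_(p)` (with `ℤ_(0)` interpreted as `ℤ_(∞) = ℤ`). -/
abbrev Zp (p : ℕ) (hp : p = 0 ∨ p.Prime) := Localization (locMon p hp)
theorem conjS_le {g : G} {K H : Subgroup G} (hK : K ≤ H) (hg : g ∈ H) : conjS g K ≤ H := by
  intro x hx
  rw [mem_conjS] at hx
  have h2 := H.mul_mem (H.mul_mem hg (hK hx)) (H.inv_mem hg)
  convert h2 using 1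
  group

/-- The ambient product `∏_{U ≤ H} ℤM(U)` of the monoid rings `ℤM(U)`. -/
abbrev MhoAmbient (Mf : MonoidFunctor G) (H : Subgroup G) :=
  ∀ U : {U : Subgroup G // U ≤ H}, MonoidAlgebra ℤ (Mf.M U.1)

/-- `℧(H,M)`: the tuples `(x_U)_{U ≤ H}` with `con_U^h(x_U) = x_{ʰU}` for all
`h ∈ H`. -/
def Mho (Mf : MonoidFunctor G) (H : Subgroup G) : Set (MhoAmbient Mf H) :=
  {x | ∀ (U : {U : Subgroup G // U ≤ H}) (h : G) (hh : h ∈ H),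
    Finsupp.mapDomain (Mf.con h U.1) (x U).coeff = (x ⟨conjS h U.1, conjS_le U.2 hh⟩).coeff}

/-- The element `(y_L^{(K,s)})_{L ≤ H}` of `℧(H,M)`: its `L`-component is the sum of
the distinct elements `ʳs ∈ M(L)` over `r ∈ H` with `ʳK = L` (equivalently, the sum
over `hN_H(K,s) ∈ N_H(K)/N_H(K,s)` of `ʳʰs` when `L = ʳK`), and `0` if `L` is not
an `H`-conjugate of `K`. -/
def yVec (R : Reps Mf H) (k : ↥R.R) : MhoAmbient Mf H :=
  fun U => ∑ᶠ (t : Mf.M U.1) (_ : ∃ r ∈ H, dot Mf r k.1 = ⟨U.1, t⟩),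
    MonoidAlgebra.single t 1

/-- The mark homomorphism `ρ_H : Ω(H,M) → ℧(H,M)`,
`[(H/K)_s] ↦ (Σ_{hK ∈ H/K, U ≤ ʰK} res_U^{ʰK}(ʰs))_{U ≤ H}`. -/
def rhoM (R : Reps Mf H) (f : ↥R.R → ℤ) : MhoAmbient Mf H :=
  fun U => ∑ᶠ k : ↥R.R, f k •
    ∑ᶠ q : ↥H ⧸ k.1.1.subgroupOf H,
      ∑ᶠ hle : U.1 ≤ conjS ((Quotient.out q : ↥H) : G) k.1.1,
        MonoidAlgebra.single
          (Mf.res hle (Mf.con ((Quotient.out q : ↥H) : G) k.1.1 k.1.2)) 1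

/-- The additive map `κ_H : Ω̃(H,M) → ℧(H,M)` sending the standard basis vector at
`(K,s)` to `(y_L^{(K,s)})_{L ≤ H}`. -/
def kappaM (R : Reps Mf H) (x : ↥R.R → ℤ) : MhoAmbient Mf H :=
  ∑ᶠ k : ↥R.R, x k • yVec Mf R k

theorem conjS_conjS (g r : G) (K : Subgroup G) : conjS g (conjS r K) = conjS (g * r) K := by
  ext x
  simp only [mem_conjS, mul_inv_rev, mul_assoc]

theorem conjS_one (K : Subgroup G) : conjS 1 K = K := by
  ext x
  simp [mem_conjS]

theorem card_conjS (g : G) (K : Subgroup G) : Nat.card (conjS g K) = Nat.card K :=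
  Subgroup.card_map_of_injective (MulAut.conj g).injective

theorem dot_inv_dot (g : G) (x : Sig Mf) : dot Mf g⁻¹ (dot Mf g x) = x := by
  rw [dot_mul, inv_mul_cancel, dot_one]

theorem dot_dot_inv (g : G) (x : Sig Mf) : dot Mf g (dot Mf g⁻¹ x) = x := by
  rw [dot_mul, mul_inv_cancel, dot_one]

theorem dot_injective (g : G) : Function.Injective (dot Mf g) :=
  Function.LeftInverse.injective (dot_inv_dot Mf g)

theorem con_injective (g : G) (K : Subgroup G) : Function.Injective (Mf.con g K) := by
  intro a b h
  have : dot Mf g ⟨K, a⟩ = dot Mf g ⟨K, b⟩ := congrArg (Sigma.mk (conjS g K)) h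
  exact sigma_mk_injective (dot_injective Mf g this)

theorem con_surjective (g : G) (K : Subgroup G) : Function.Surjective (Mf.con g K) := by
  intro t
  obtain ⟨⟨K', s⟩, hs⟩ : ∃ y, dot Mf g y = ⟨conjS g K, t⟩ := ⟨_, dot_dot_inv Mf g _⟩
  obtain rfl : K' = K := by
    simpa [dot, conjS_conjS, conjS_one] using congrArg (conjS g⁻¹) (congrArg Sigma.fst hs)
  exact ⟨s, eq_of_heq (Sigma.mk.inj_iff.mp hs).2⟩

def OrbitRel (H : Subgroup G) (x y : Sig Mf) : Prop := ∃ h ∈ H, dot Mf h x = y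

theorem orbitRel_equivalence (H : Subgroup G) : Equivalence (OrbitRel Mf H) where
  refl x := ⟨1, H.one_mem, dot_one Mf x⟩
  symm := by
    rintro x _ ⟨h, hh, rfl⟩
    exact ⟨h⁻¹, H.inv_mem hh, dot_inv_dot Mf h x⟩
  trans := by
    rintro x _ _ ⟨h, hh, rfl⟩ ⟨h', hh', rfl⟩
    exact ⟨h' * h, H.mul_mem hh' hh, (dot_mul Mf h' h x).symm⟩

section Reps

variable (R : Reps Mf H)

def repOf (x : Sig Mf) (hx : x.1 ≤ H) : ↥R.R :=
  ⟨_, (R.complete x hx).exists.choose_spec.1⟩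

theorem orbitRel_repOf (x : Sig Mf) (hx : x.1 ≤ H) : OrbitRel Mf H x (repOf Mf R x hx) :=
  (R.complete x hx).exists.choose_spec.2

theorem eq_repOf_iff {x : Sig Mf} (hx : x.1 ≤ H) {k : ↥R.R} :
    k = repOf Mf R x hx ↔ OrbitRel Mf H k x := by
  refine ⟨fun h => h ▸ (orbitRel_equivalence Mf H).symm (orbitRel_repOf Mf R x hx), fun h => ?_⟩
  exact Subtype.ext <| (R.complete x hx).unique ⟨k.2, (orbitRel_equivalence Mf H).symm h⟩
    ⟨(repOf Mf R x hx).2, orbitRel_repOf Mf R x hx⟩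

theorem repOf_self (k : ↥R.R) : repOf Mf R k (R.subset k k.2) = k :=
  ((eq_repOf_iff Mf R _).2 ((orbitRel_equivalence Mf H).refl _)).symm

theorem repOf_eq_of_orbitRel {x y : Sig Mf} (hxy : OrbitRel Mf H x y) (hx : x.1 ≤ H)
    (hy : y.1 ≤ H) : repOf Mf R x hx = repOf Mf R y hy :=
  (eq_repOf_iff Mf R hy).2 <| (orbitRel_equivalence Mf H).trans
    ((orbitRel_equivalence Mf H).symm (orbitRel_repOf Mf R x hx)) hxy

theorem Reps.eq_of_orbitRel {k k' : ↥R.R} (h : OrbitRel Mf H k k') : k = k' := by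
  rw [← repOf_self Mf R k, ← repOf_self Mf R k', repOf_eq_of_orbitRel Mf R h]

end Reps

def coeffAt (x : MhoAmbient Mf H) (y : Sig Mf) (hy : y.1 ≤ H) : ℤ := (x ⟨y.1, hy⟩).coeff y.2

theorem MhoAmbient.ext {x x' : MhoAmbient Mf H}
    (h : ∀ y hy, coeffAt Mf x y hy = coeffAt Mf x' y hy) : x = x' :=
  funext fun U => MonoidAlgebra.ext (Finsupp.ext fun t => h ⟨U.1, t⟩ U.2)

theorem mem_Mho_iff {x : MhoAmbient Mf H} :
    x ∈ Mho Mf H ↔ ∀ (y z : Sig Mf) (hy : y.1 ≤ H) (hz : z.1 ≤ H),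
      OrbitRel Mf H y z → coeffAt Mf x y hy = coeffAt Mf x z hz := by
  constructor
  · rintro hx y _ hy - ⟨h, hh, rfl⟩
    change _ = (x ⟨conjS h y.1, conjS_le hy hh⟩).coeff (Mf.con h y.1 y.2)
    rw [← hx ⟨y.1, hy⟩ h hh, Finsupp.mapDomain_apply (con_injective Mf h y.1)]
    rfl
  · intro hx U h hh
    ext b
    obtain ⟨t, rfl⟩ := con_surjective Mf h U.1 b
    rw [Finsupp.mapDomain_apply (con_injective Mf h U.1)]
    exact hx ⟨U.1, t⟩ _ U.2 _ ⟨h, hh, rfl⟩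

theorem _root_.MonoidAlgebra.coeff_finsum_single {R M : Type*} [Semiring R] [Finite M]
    (p : M → Prop) (r : R) (m : M) :
    (∑ᶠ (n : M) (_ : p n), MonoidAlgebra.single n r).coeff m = if p m then r else 0 := by
  have := Fintype.ofFinite M
  simp only [finsum_eq_if, finsum_eq_sum_of_fintype, MonoidAlgebra.coeff_sum,
    apply_ite MonoidAlgebra.coeff, Finset.sum_apply']
  rw [Finset.sum_eq_single m (fun n _ hn => by split_ifs <;> simp [hn]) (by simp)]
  split_ifs <;> simp

def RestrictsTo (x u : Sig Mf) : Prop := ∃ hle : u.1 ≤ x.1, u.2 = Mf.res hle x.2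

theorem restrictsTo_refl (x : Sig Mf) : RestrictsTo Mf x x :=
  ⟨le_rfl, (Mf.res_self x.1 x.2).symm⟩

theorem RestrictsTo.dot {x u : Sig Mf} (g : G) (h : RestrictsTo Mf x u) :
    RestrictsTo Mf (dot Mf g x) (dot Mf g u) := by
  obtain ⟨hle, ht⟩ := h
  refine ⟨conjS_mono g hle, ?_⟩
  change Mf.con g u.1 u.2 = Mf.res _ (Mf.con g x.1 x.2)
  rw [ht, Mf.con_res]

theorem restrictsTo_dot_iff (g : G) {x u : Sig Mf} :
    RestrictsTo Mf (dot Mf g x) (dot Mf g u) ↔ RestrictsTo Mf x u :=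
  ⟨fun h => by simpa only [dot_inv_dot] using h.dot Mf g⁻¹, RestrictsTo.dot Mf g⟩

theorem RestrictsTo.eq_of_card_le [Finite G] {x u : Sig Mf} (h : RestrictsTo Mf x u)
    (hc : Nat.card x.1 ≤ Nat.card u.1) : u = x := by
  obtain ⟨hle, ht⟩ := h
  obtain ⟨U, t⟩ := u
  obtain rfl : U = x.1 := Subgroup.eq_of_le_of_card_ge hle hc
  exact Sigma.ext rfl (heq_of_eq (ht.trans (Mf.res_self _ _)))

theorem dot_eq_of_mk_eq {x : Sig Mf} {h h' : ↥H}
    (hq : (h : ↥H ⧸ x.1.subgroupOf H) = h') : dot Mf h' x = dot Mf h x := by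
  have hk : ((h⁻¹ * h' : ↥H) : G) ∈ x.1 := Subgroup.mem_subgroupOf.mp (QuotientGroup.eq.mp hq)
  rw [show (h' : G) = h * ((h⁻¹ * h' : ↥H) : G) by simp, ← dot_mul]
  exact congrArg (dot Mf h) (Mf.con_id x.1 _ hk x.2)

theorem invCount_eq_card_out (x u : Sig Mf) :
    invCount Mf H x u = Nat.card {q : ↥H ⧸ x.1.subgroupOf H //
      RestrictsTo Mf (dot Mf (Quotient.out q : ↥H) x) u} := by
  refine Nat.card_congr (Equiv.subtypeEquivRight fun q => ⟨?_, fun hr => ⟨_, q.out_eq', hr⟩⟩)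
  rintro ⟨h, hq, hr⟩
  rwa [dot_eq_of_mk_eq Mf (hq.trans q.out_eq'.symm)]

theorem invCount_dot_right (x : Sig Mf) {u : Sig Mf} {r : G} (hr : r ∈ H) :
    invCount Mf H x (dot Mf r u) = invCount Mf H x u := by
  let ρ : ↥H := ⟨r, hr⟩
  refine Nat.card_congr (Equiv.subtypeEquiv (MulAction.toPerm ρ⁻¹) fun q => ?_)
  change (∃ h : ↥H, (h : ↥H ⧸ _) = q ∧ RestrictsTo Mf (dot Mf h x) (dot Mf r u)) ↔
    ∃ h : ↥H, (h : ↥H ⧸ _) = ρ⁻¹ • q ∧ RestrictsTo Mf (dot Mf h x) u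
  constructor
  · rintro ⟨h, rfl, hh⟩
    refine ⟨ρ⁻¹ * h, by rw [MulAction.Quotient.smul_mk, smul_eq_mul], ?_⟩
    rw [← restrictsTo_dot_iff Mf r, dot_mul]
    simpa [ρ] using hh
  · rintro ⟨h, hq, hh⟩
    refine ⟨ρ * h, ?_, ?_⟩
    · rw [← smul_eq_mul, ← MulAction.Quotient.smul_mk, hq, smul_inv_smul]
    · rw [Subgroup.coe_mul, ← dot_mul]
      exact hh.dot Mf r

theorem invCount_self_pos [Finite G] (u : Sig Mf) : 0 < invCount Mf H u u := by
  have hu : RestrictsTo Mf (dot Mf ((1 : ↥H) : G) u) u := by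
    rw [Subgroup.coe_one, dot_one]
    exact restrictsTo_refl Mf u
  exact Nat.card_pos_iff.2 ⟨⟨⟨_, 1, rfl, hu⟩⟩, inferInstance⟩

theorem invCount_eq_zero_of_card_le [Finite G] {x u : Sig Mf} (hxu : ¬ OrbitRel Mf H x u)
    (hc : Nat.card x.1 ≤ Nat.card u.1) : invCount Mf H x u = 0 := by
  have : IsEmpty {q : ↥H ⧸ x.1.subgroupOf H // ∃ h : ↥H, (h : ↥H ⧸ _) = q ∧
      RestrictsTo Mf (dot Mf h x) u} :=
    ⟨fun ⟨_, h, _, hr⟩ => hxu ⟨h, h.2, (hr.eq_of_card_le Mf ((card_conjS _ _).trans_le hc)).symm⟩⟩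
  exact @Nat.card_of_isEmpty _ this

theorem coeff_finsum_single_res (x u : Sig Mf) (g : G) :
    (∑ᶠ hle : u.1 ≤ conjS g x.1,
        MonoidAlgebra.single (Mf.res hle (Mf.con g x.1 x.2)) (1 : ℤ)).coeff u.2
      = if RestrictsTo Mf (dot Mf g x) u then 1 else 0 := by
  rw [finsum_eq_dif]
  by_cases hle : u.1 ≤ conjS g x.1
  · simp only [hle, dif_pos, MonoidAlgebra.coeff_single, Finsupp.single_apply]
    congr 1
    exact propext ⟨fun h => ⟨hle, h.symm⟩, fun ⟨_, h⟩ => h.symm⟩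
  · simp [hle, RestrictsTo, dot]

theorem coeff_finsum_cosets_eq_invCount [Finite G] (x u : Sig Mf) :
    (∑ᶠ q : ↥H ⧸ x.1.subgroupOf H, ∑ᶠ hle : u.1 ≤ conjS ((Quotient.out q : ↥H) : G) x.1,
        MonoidAlgebra.single (Mf.res hle (Mf.con ((Quotient.out q : ↥H) : G) x.1 x.2))
          (1 : ℤ)).coeff u.2 = invCount Mf H x u := by
  have := Fintype.ofFinite (↥H ⧸ x.1.subgroupOf H)
  rw [finsum_eq_sum_of_fintype, MonoidAlgebra.coeff_sum, Finset.sum_apply']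
  simp only [coeff_finsum_single_res, Finset.sum_boole, invCount_eq_card_out,
    Nat.card_eq_fintype_card, Fintype.card_subtype]

section

variable [Finite G] [∀ K, Finite (Mf.M K)] (R : Reps Mf H)

theorem coeffAt_yVec (k : ↥R.R) (y : Sig Mf) (hy : y.1 ≤ H) :
    coeffAt Mf (yVec Mf R k) y hy = if OrbitRel Mf H k y then 1 else 0 :=
  MonoidAlgebra.coeff_finsum_single _ _ _

theorem kappaM_eq_linearCombination [Fintype ↥R.R] :
    kappaM Mf R = Fintype.linearCombination ℤ (yVec Mf R) :=
  funext fun _ => finsum_eq_sum_of_fintype _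

theorem coeffAt_kappaM (x : ↥R.R → ℤ) (y : Sig Mf) (hy : y.1 ≤ H) :
    coeffAt Mf (kappaM Mf R x) y hy = x (repOf Mf R y hy) := by
  have := Fintype.ofFinite ↥R.R
  calc coeffAt Mf (kappaM Mf R x) y hy = ∑ k, x k * coeffAt Mf (yVec Mf R k) y hy := by
        simp only [kappaM_eq_linearCombination, Fintype.linearCombination_apply, coeffAt,
          Finset.sum_apply, Pi.smul_apply, MonoidAlgebra.coeff_sum, MonoidAlgebra.coeff_smul,
          Finset.sum_apply', Finsupp.smul_apply, smul_eq_mul]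
    _ = ∑ k, if k = repOf Mf R y hy then x k else 0 := by
        refine Finset.sum_congr rfl fun k _ => ?_
        simp only [coeffAt_yVec, eq_repOf_iff, mul_ite, mul_one, mul_zero]
    _ = x (repOf Mf R y hy) := by simp

theorem kappaM_injective : Function.Injective (kappaM Mf R) := fun x x' h => funext fun k => by
  simpa only [coeffAt_kappaM, repOf_self] using
    congrArg (coeffAt Mf · k (R.subset k k.2)) h

theorem range_kappaM : Set.range (kappaM Mf R) = Mho Mf H := by
  ext x
  constructor
  · rintro ⟨c, rfl⟩
    rw [mem_Mho_iff]
    intro y z hy hz hyz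
    rw [coeffAt_kappaM, coeffAt_kappaM, repOf_eq_of_orbitRel Mf R hyz]
  · intro hx
    refine ⟨fun k => coeffAt Mf x k (R.subset k k.2), MhoAmbient.ext Mf fun y hy => ?_⟩
    rw [coeffAt_kappaM]
    exact (mem_Mho_iff Mf).1 hx _ _ _ _
      ((orbitRel_equivalence Mf H).symm (orbitRel_repOf Mf R y hy))

theorem linearIndependent_yVec : LinearIndependent ℤ (yVec Mf R) := by
  have := Fintype.ofFinite ↥R.R
  rw [linearIndependent_iff_injective_fintypeLinearCombination, ← kappaM_eq_linearCombination]
  exact kappaM_injective Mf R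

theorem span_range_yVec :
    (Submodule.span ℤ (Set.range (yVec Mf R)) : Set (MhoAmbient Mf H)) = Mho Mf H := by
  have := Fintype.ofFinite ↥R.R
  rw [← Fintype.range_linearCombination, LinearMap.coe_range, ← kappaM_eq_linearCombination,
    range_kappaM]

theorem coeffAt_rhoM (f : ↥R.R → ℤ) (y : Sig Mf) (hy : y.1 ≤ H) :
    coeffAt Mf (rhoM Mf R f) y hy = ∑ᶠ k : ↥R.R, f k * invCount Mf H k y := by
  have := Fintype.ofFinite ↥R.R
  simp only [coeffAt, rhoM, finsum_eq_sum_of_fintype (fun k : ↥R.R => _ • _),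
    MonoidAlgebra.coeff_sum, MonoidAlgebra.coeff_smul, Finset.sum_apply', Finsupp.smul_apply,
    smul_eq_mul, coeff_finsum_cosets_eq_invCount]
  exact (finsum_eq_sum_of_fintype _).symm

theorem kappaM_phiM (f : ↥R.R → ℤ) : kappaM Mf R (phiM Mf R f) = rhoM Mf R f := by
  refine MhoAmbient.ext Mf fun y hy => ?_
  obtain ⟨r, hr, hry⟩ := orbitRel_repOf Mf R y hy
  rw [coeffAt_kappaM, coeffAt_rhoM, phiM, ← hry]
  simp only [invCount_dot_right Mf _ hr]

theorem phiM_apply [Fintype ↥R.R] (f : ↥R.R → ℤ) (u : ↥R.R) :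
    phiM Mf R f u = ∑ k, f k * invCount Mf H k u :=
  finsum_eq_sum_of_fintype _

theorem phiM_injective : Function.Injective (phiM Mf R) := by
  have := Fintype.ofFinite ↥R.R
  intro f g hfg
  by_contra hne
  obtain ⟨u, hu, hmax⟩ := Finset.exists_max_image {k | f k ≠ g k} (fun k : ↥R.R => Nat.card k.1.1)
    (by simpa [Finset.filter_nonempty_iff, funext_iff] using hne)
  have hoff : ∀ k ≠ u, (f k - g k) * invCount Mf H k u = 0 := by
    intro k hku
    by_cases hk : f k = g k
    · simp [hk]
    rw [invCount_eq_zero_of_card_le Mf (fun h => hku (R.eq_of_orbitRel Mf h))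
      (hmax k (by simpa using hk)), Nat.cast_zero, mul_zero]
  have hdiag : (f u - g u) * invCount Mf H u u = 0 :=
    calc (f u - g u) * invCount Mf H u u = ∑ k, (f k - g k) * invCount Mf H k u :=
          (Finset.sum_eq_single u (fun k _ => hoff k) (by simp)).symm
      _ = phiM Mf R f u - phiM Mf R g u := by
          simp only [phiM_apply, sub_mul, Finset.sum_sub_distrib]
      _ = 0 := by rw [hfg, sub_self]
  have hpos := invCount_self_pos Mf (H := H) u
  simp only [mul_eq_zero, sub_eq_zero, Nat.cast_eq_zero, hpos.ne'] at hdiag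
  exact (Finset.mem_filter.1 hu).2 (hdiag.resolve_right id)

theorem rhoM_injective : Function.Injective (rhoM Mf R) := by
  have : rhoM Mf R = kappaM Mf R ∘ phiM Mf R := funext fun f => (kappaM_phiM Mf R f).symm
  rw [this]
  exact (kappaM_injective Mf R).comp (phiM_injective Mf R)

end

/-- (i) The elements `(y_L^{(K,s)})_{L ≤ H}`, `(K,s) ∈ R(H,M)`, form
a free `ℤ`-basis of `℧(H,M)`, and `κ_H : Ω̃(H,M) → ℧(H,M)` is an isomorphism;
(ii) `κ_H ∘ φ_H = ρ_H`; (iii) `φ_H` and `ρ_H` are injective. -/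
theorem kappa_basis_and_mark [Finite G] (hMf : ∀ K : Subgroup G, Finite (Mf.M K))
    (R : Reps Mf H) :
    (LinearIndependent ℤ (yVec Mf R) ∧
      (Submodule.span ℤ (Set.range (yVec Mf R)) : Set (MhoAmbient Mf H)) = Mho Mf H) ∧
    (Function.Injective (kappaM Mf R) ∧ Set.range (kappaM Mf R) = Mho Mf H) ∧
    (∀ f : ↥R.R → ℤ, kappaM Mf R (phiM Mf R f) = rhoM Mf R f) ∧
    Function.Injective (phiM Mf R) ∧
    Function.Injective (rhoM Mf R) :=
  ⟨⟨linearIndependent_yVec Mf R, span_range_yVec Mf R⟩, ⟨kappaM_injective Mf R, range_kappaM Mf R⟩,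
    kappaM_phiM Mf R, phiM_injective Mf R, rhoM_injective Mf R⟩

end
end LB
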